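/- arXiv:2307.09894 — 2 statements merged into one kernel-verified Lean document; each statement's English description precedes it below -/
import Mathlib

section
/- Every matching m on [N] with k unstable chords can be written as insert_{i1} ∘ ... ∘ insert_{ik} applied to core(m), for some sequence of indices i1, ..., ik. -/
/-- The set of endpoints of a finite set of chords (unordered pairs). -/
def endpointSet (R : Finset (Sym2 ℕ)) : Set ℕ := {x | ∃ c ∈ R, x ∈ c}

/-- A matching on the vertex set `S`: a finite set of pairwise disjoint chords
(unordered pairs of distinct elements of `S`).  Vertices of `S` not covered by
any chord are the unmatched vertices. -/
structure MatchingOn (S : Finset ℕ) where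
  chords : Finset (Sym2 ℕ)
  not_diag : ∀ c ∈ chords, ¬ c.IsDiag
  mem_support : ∀ c ∈ chords, ∀ x ∈ c, x ∈ S
  disj : ∀ c ∈ chords, ∀ c' ∈ chords, c ≠ c' → ∀ x ∈ c, x ∉ c'

/-- The number of unmatched vertices of a matching. -/
noncomputable def unmatchedCard {S : Finset ℕ} (m : MatchingOn S) : ℕ :=
  ((S : Set ℕ) \ endpointSet m.chords).ncard

/-- `c` has no element of `T` strictly between its endpoints. -/
def btwnFree (T : Set ℕ) (c : Sym2 ℕ) : Prop :=
  ¬ ∃ x ∈ T, ∃ a b, c = s(a, b) ∧ a < x ∧ x < b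

/-- Given that the chords in `R` have already been removed, the chord `c` can be
removed: it is a chord of `m` not yet removed, with no surviving vertex strictly
between its endpoints. -/
def removable {S : Finset ℕ} (m : MatchingOn S) (R : Finset (Sym2 ℕ)) (c : Sym2 ℕ) : Prop :=
  c ∈ m.chords ∧ c ∉ R ∧ btwnFree ((S : Set ℕ) \ endpointSet R) c

/-- `IsReduction m R L`: starting with the chords of `R` already removed, the list `L`
is a valid sequence of successive removals of short chords. -/
inductive IsReduction {S : Finset ℕ} (m : MatchingOn S) :
    Finset (Sym2 ℕ) → List (Sym2 ℕ) → Prop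
  | nil (R : Finset (Sym2 ℕ)) : IsReduction m R []
  | cons (R : Finset (Sym2 ℕ)) (c : Sym2 ℕ) (L : List (Sym2 ℕ)) :
      removable m R c → IsReduction m (insert c R) L → IsReduction m R (c :: L)

/-- A maximal reduction process of `m`: a valid removal sequence starting from `m`
after which no further chord can be removed. -/
def IsMaximalReduction {S : Finset ℕ} (m : MatchingOn S) (L : List (Sym2 ℕ)) : Prop :=
  IsReduction m ∅ L ∧ ∀ c, ¬ removable m L.toFinset c

/-- The set of stable vertices of a matching on `[N]` whose reduction process removed
the chords of `L`. -/
def stableSet (N : ℕ) (L : List (Sym2 ℕ)) : Set ℕ :=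
  (Finset.Icc 1 N : Set ℕ) \ endpointSet L.toFinset

/-- `m0` (a matching on `[M]`) is the core of the matching `m` on `[N]` via the
reduction process `L`: the order-preserving re-indexing of the stable vertices of
`m` by `{1, …, M}` carries the stable chords of `m` exactly to the chords of `m0`. -/
def IsCoreVia {N M : ℕ} (m : MatchingOn (Finset.Icc 1 N)) (L : List (Sym2 ℕ))
    (m0 : MatchingOn (Finset.Icc 1 M)) : Prop :=
  ∃ φ : ℕ → ℕ, Set.BijOn φ (stableSet N L) ↑(Finset.Icc 1 M) ∧
    (∀ x ∈ stableSet N L, ∀ y ∈ stableSet N L, x < y → φ x < φ y) ∧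
    ∀ a b, a ∈ stableSet N L → b ∈ stableSet N L →
      (s(a, b) ∈ m.chords ↔ s(φ a, φ b) ∈ m0.chords)

/-- `insertChords i C`: insert a new short chord `(i, i+1)`, shifting all vertices
`≥ i` up by `2`. -/
def insertChords (i : ℕ) (C : Finset (Sym2 ℕ)) : Finset (Sym2 ℕ) :=
  insert s(i, i + 1) (C.image (Sym2.map fun x => if x < i then x else x + 2))

/-! ### Auxiliary definitions and lemmas -/

/-- shift up by 2 above `a` -/
def sUp (a x : ℕ) : ℕ := if x < a then x else x + 2

/-- shift down by 2 above `a` -/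
def sDn (a x : ℕ) : ℕ := if x < a then x else x - 2

lemma insertChords_eq (i : ℕ) (C : Finset (Sym2 ℕ)) :
    insertChords i C = insert s(i, i + 1) (C.image (Sym2.map (sUp i))) := rfl

lemma sUp_mono (a : ℕ) : StrictMono (sUp a) := by
  intro x y h; unfold sUp; split_ifs <;> omega

lemma sDn_sUp (a x : ℕ) : sDn a (sUp a x) = x := by
  unfold sUp sDn; split_ifs <;> omega

lemma sUp_sDn (a x : ℕ) (h1 : x ≠ a) (h2 : x ≠ a + 1) : sUp a (sDn a x) = x := by
  unfold sUp sDn; split_ifs <;> omega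

lemma sUp_ne (a x : ℕ) : sUp a x ≠ a ∧ sUp a x ≠ a + 1 := by
  unfold sUp; split_ifs <;> omega

lemma sDn_inj (a x y : ℕ) (hx1 : x ≠ a) (hx2 : x ≠ a + 1) (hy1 : y ≠ a) (hy2 : y ≠ a + 1)
    (h : sDn a x = sDn a y) : x = y := by
  unfold sDn at h; split_ifs at h <;> omega

lemma sDn_lt (a x y : ℕ) (hx1 : x ≠ a) (hx2 : x ≠ a + 1) (hy1 : y ≠ a) (hy2 : y ≠ a + 1)
    (h : x < y) : sDn a x < sDn a y := by
  unfold sDn; split_ifs <;> omega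

lemma sDn_range (a N x : ℕ) (ha : 1 ≤ a) (haN : a + 1 ≤ N) (h1 : 1 ≤ x) (h2 : x ≤ N)
    (h3 : x ≠ a) (h4 : x ≠ a + 1) : 1 ≤ sDn a x ∧ sDn a x ≤ N - 2 := by
  unfold sDn; split_ifs <;> omega

lemma sUp_range (a N x : ℕ) (ha : 1 ≤ a) (haN : a + 1 ≤ N) (h1 : 1 ≤ x) (h2 : x ≤ N - 2) :
    1 ≤ sUp a x ∧ sUp a x ≤ N := by
  unfold sUp; split_ifs <;> omega

lemma sym2_rep (c : Sym2 ℕ) (h : ¬ c.IsDiag) : ∃ x y, x < y ∧ c = s(x, y) := by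
  induction c using Sym2.ind with
  | _ x y =>
    rw [Sym2.mk_isDiag_iff] at h
    rcases Nat.lt_or_ge x y with h' | h'
    · exact ⟨x, y, h', rfl⟩
    · exact ⟨y, x, lt_of_le_of_ne h' (Ne.symm h), Sym2.eq_swap⟩

lemma btwnFree_iff (T : Set ℕ) (x y : ℕ) (hxy : x < y) :
    btwnFree T s(x, y) ↔ ∀ t ∈ T, ¬ (x < t ∧ t < y) := by
  constructor
  · rintro h t ht ⟨h1, h2⟩
    exact h ⟨t, ht, x, y, rfl, h1, h2⟩
  · rintro h ⟨t, ht, p, q, hc, h1, h2⟩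
    rw [Sym2.eq_iff] at hc
    rcases hc with ⟨rfl, rfl⟩ | ⟨rfl, rfl⟩
    · exact h t ht ⟨h1, h2⟩
    · omega

lemma isReduction_mem {S : Finset ℕ} {m : MatchingOn S} {R : Finset (Sym2 ℕ)}
    {L : List (Sym2 ℕ)} (h : IsReduction m R L) : ∀ c ∈ L, c ∈ m.chords ∧ c ∉ R := by
  induction h with
  | nil => simp
  | cons R c L hrc _ ih =>
    intro d hd
    rcases List.mem_cons.mp hd with rfl | hd
    · exact ⟨hrc.1, hrc.2.1⟩
    · obtain ⟨h1, h2⟩ := ih d hd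
      exact ⟨h1, fun hR => h2 (Finset.mem_insert_of_mem hR)⟩

theorem core_aux (n : ℕ) : ∀ (L : List (Sym2 ℕ)), L.length = n →
    ∀ (N : ℕ) (m : MatchingOn (Finset.Icc 1 N)),
    IsMaximalReduction m L → ∀ (M : ℕ) (m0 : MatchingOn (Finset.Icc 1 M)),
    IsCoreVia m L m0 →
    ∃ idx : List ℕ, idx.length = n ∧ m.chords = idx.foldr insertChords m0.chords := by
  induction n with
  | zero =>
    intro L hLen N m _ M m0 hcore
    rw [List.length_eq_zero_iff] at hLen
    subst hLen
    obtain ⟨φ, hbij, hmono, hch⟩ := hcore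
    have hst : stableSet N [] = ↑(Finset.Icc 1 N) := by
      ext x; simp [stableSet, endpointSet]
    rw [hst] at hbij hmono hch
    have h1 : ∀ x, 1 ≤ x → x ≤ N → x ≤ φ x := by
      intro x
      induction x with
      | zero => omega
      | succ n ihn =>
        intro _ hn
        by_cases hn0 : n = 0
        · subst hn0
          have := hbij.1 (show (1:ℕ) ∈ (↑(Finset.Icc 1 N) : Set ℕ) by
            simp [Finset.mem_Icc]; omega)
          simp only [Finset.mem_coe, Finset.mem_Icc] at this
          simpa using this.1
        · have hlt := hmono n (by simp [Finset.mem_Icc]; omega) (n+1)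
            (by simp [Finset.mem_Icc]; omega) (by omega)
          have := ihn (by omega) (by omega)
          omega
    have h2 : ∀ d x, 1 ≤ x → x ≤ N → N - x = d → φ x + (N - x) ≤ M := by
      intro d
      induction d with
      | zero =>
        intro x hx1 hx2 hd
        have := hbij.1 (show x ∈ (↑(Finset.Icc 1 N) : Set ℕ) by
          simp [Finset.mem_Icc]; omega)
        simp only [Finset.mem_coe, Finset.mem_Icc] at this
        omega
      | succ d ihd =>
        intro x hx1 hx2 hd
        have hlt := hmono x (by simp [Finset.mem_Icc]; omega) (x+1)
          (by simp [Finset.mem_Icc]; omega) (by omega)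
        have := ihd (x+1) (by omega) (by omega) (by omega)
        omega
    have hMN : M = N := by
      have h1' := Set.ncard_image_of_injOn hbij.injOn
      rw [hbij.image_eq] at h1'
      rw [Set.ncard_coe_finset, Set.ncard_coe_finset, Nat.card_Icc, Nat.card_Icc] at h1'
      omega
    have hid : ∀ x, 1 ≤ x → x ≤ N → φ x = x := by
      intro x hx1 hx2
      have ha := h1 x hx1 hx2
      have hb := h2 (N - x) x hx1 hx2 rfl
      omega
    refine ⟨[], rfl, ?_⟩
    simp only [List.foldr_nil]
    apply Finset.ext
    intro c
    constructor
    · intro hc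
      obtain ⟨x, y, hxy, rfl⟩ := sym2_rep c (m.not_diag c hc)
      have hxS := m.mem_support _ hc x (by simp)
      have hyS := m.mem_support _ hc y (by simp)
      simp only [Finset.mem_Icc] at hxS hyS
      have := (hch x y (by simp [Finset.mem_Icc]; omega) (by simp [Finset.mem_Icc]; omega)).mp hc
      rwa [hid x hxS.1 hxS.2, hid y hyS.1 hyS.2] at this
    · intro hc
      obtain ⟨x, y, hxy, rfl⟩ := sym2_rep c (m0.not_diag c hc)
      have hxS := m0.mem_support _ hc x (by simp)
      have hyS := m0.mem_support _ hc y (by simp)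
      simp only [Finset.mem_Icc] at hxS hyS
      refine (hch x y (by simp [Finset.mem_Icc]; omega) (by simp [Finset.mem_Icc]; omega)).mpr ?_
      rwa [hid x (by omega) (by omega), hid y (by omega) (by omega)]
  | succ n ih =>
    intro L hLen N m hL M m0 hcore
    obtain ⟨c1, L', rfl⟩ : ∃ c1 L', L = c1 :: L' := by
      cases L with
      | nil => simp at hLen
      | cons c1 L' => exact ⟨c1, L', rfl⟩
    simp only [List.length_cons, Nat.succ.injEq] at hLen
    obtain ⟨hred, hmax⟩ := hL
    cases hred with
    | cons _ _ _ hrem1 hred' =>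
    obtain ⟨hc1m, -, hbf1⟩ := hrem1
    obtain ⟨a, b, hab, hc1⟩ := sym2_rep c1 (m.not_diag c1 hc1m)
    subst hc1
    have haS := m.mem_support _ hc1m a (by simp)
    have hbS := m.mem_support _ hc1m b (by simp)
    simp only [Finset.mem_Icc] at haS hbS
    have hb : b = a + 1 := by
      by_contra hne
      refine (btwnFree_iff _ a b hab).mp hbf1 (a+1) ⟨?_, ?_⟩ ⟨by omega, by omega⟩
      · simp only [Finset.mem_coe, Finset.mem_Icc]; omega
      · simp [endpointSet]
    subst hb
    have ha1 : 1 ≤ a := haS.1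
    have haN : a + 1 ≤ N := hbS.2
    -- endpoint facts for chords other than s(a, a+1)
    have hept : ∀ c ∈ m.chords, c ≠ s(a, a+1) → ∀ x ∈ c, 1 ≤ x ∧ x ≤ N ∧ x ≠ a ∧ x ≠ a + 1 := by
      intro c hc hne x hx
      have hxS := m.mem_support c hc x hx
      simp only [Finset.mem_Icc] at hxS
      have hxa : x ∉ s(a, a+1) := m.disj c hc _ hc1m hne x hx
      simp only [Sym2.mem_iff] at hxa
      push_neg at hxa
      exact ⟨hxS.1, hxS.2, hxa.1, hxa.2⟩
    have hchordept : ∀ c ∈ m.chords.erase s(a, a+1), ∀ x ∈ c,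
        1 ≤ x ∧ x ≤ N ∧ x ≠ a ∧ x ≠ a + 1 := by
      intro c hc x hx
      rw [Finset.mem_erase] at hc
      exact hept c hc.2 hc.1 x hx
    have hmapinj : ∀ c ∈ m.chords.erase s(a, a+1), ∀ d ∈ m.chords.erase s(a, a+1),
        Sym2.map (sDn a) c = Sym2.map (sDn a) d → c = d := by
      intro c hc d hd h
      obtain ⟨u, v, huv, rfl⟩ := sym2_rep c (m.not_diag c (Finset.mem_of_mem_erase hc))
      obtain ⟨p, q, hpq, rfl⟩ := sym2_rep d (m.not_diag d (Finset.mem_of_mem_erase hd))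
      have hu := hchordept _ hc u (by simp)
      have hv := hchordept _ hc v (by simp)
      have hp := hchordept _ hd p (by simp)
      have hq := hchordept _ hd q (by simp)
      rw [Sym2.map_pair_eq, Sym2.map_pair_eq, Sym2.eq_iff] at h
      rw [Sym2.eq_iff]
      rcases h with ⟨e1, e2⟩ | ⟨e1, e2⟩
      · exact Or.inl ⟨sDn_inj a u p hu.2.2.1 hu.2.2.2 hp.2.2.1 hp.2.2.2 e1,
          sDn_inj a v q hv.2.2.1 hv.2.2.2 hq.2.2.1 hq.2.2.2 e2⟩
      · exact Or.inr ⟨sDn_inj a u q hu.2.2.1 hu.2.2.2 hq.2.2.1 hq.2.2.2 e1,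
          sDn_inj a v p hv.2.2.1 hv.2.2.2 hp.2.2.1 hp.2.2.2 e2⟩
    have hroundtrip : ∀ c ∈ m.chords.erase s(a, a+1),
        Sym2.map (sUp a) (Sym2.map (sDn a) c) = c := by
      intro c hc
      obtain ⟨u, v, huv, rfl⟩ := sym2_rep c (m.not_diag c (Finset.mem_of_mem_erase hc))
      have hu := hchordept _ hc u (by simp)
      have hv := hchordept _ hc v (by simp)
      rw [Sym2.map_pair_eq, Sym2.map_pair_eq, sUp_sDn a u hu.2.2.1 hu.2.2.2,
        sUp_sDn a v hv.2.2.1 hv.2.2.2]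
    -- the reduced matching
    let m' : MatchingOn (Finset.Icc 1 (N - 2)) :=
      { chords := (m.chords.erase s(a, a+1)).image (Sym2.map (sDn a))
        not_diag := by
          intro c hc
          rw [Finset.mem_image] at hc
          obtain ⟨d, hd, rfl⟩ := hc
          obtain ⟨u, v, huv, rfl⟩ := sym2_rep d (m.not_diag d (Finset.mem_of_mem_erase hd))
          have hu := hchordept _ hd u (by simp)
          have hv := hchordept _ hd v (by simp)
          rw [Sym2.map_pair_eq, Sym2.mk_isDiag_iff]
          intro h
          exact absurd (sDn_inj a u v hu.2.2.1 hu.2.2.2 hv.2.2.1 hv.2.2.2 h) (by omega)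
        mem_support := by
          intro c hc x hx
          rw [Finset.mem_image] at hc
          obtain ⟨d, hd, rfl⟩ := hc
          rw [Sym2.mem_map] at hx
          obtain ⟨u, hu, rfl⟩ := hx
          have h := hchordept _ hd u hu
          have := sDn_range a N u ha1 haN h.1 h.2.1 h.2.2.1 h.2.2.2
          simp only [Finset.mem_Icc]
          exact this
        disj := by
          intro c hc c' hc' hne x hx hx'
          rw [Finset.mem_image] at hc hc'
          obtain ⟨d, hd, rfl⟩ := hc
          obtain ⟨d', hd', rfl⟩ := hc'
          rw [Sym2.mem_map] at hx hx'
          obtain ⟨u, hu, rfl⟩ := hx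
          obtain ⟨u', hu', heq⟩ := hx'
          have h := hchordept _ hd u hu
          have h' := hchordept _ hd' u' hu'
          have huu : u' = u := sDn_inj a u' u h'.2.2.1 h'.2.2.2 h.2.2.1 h.2.2.2 heq
          subst huu
          have hdd : d ≠ d' := fun h => hne (by rw [h])
          exact m.disj d (Finset.mem_of_mem_erase hd) d' (Finset.mem_of_mem_erase hd') hdd u' hu hu' }
    have hm'c : m'.chords = (m.chords.erase s(a, a+1)).image (Sym2.map (sDn a)) := rfl
    -- reduction transfer
    have key : ∀ (Lr : List (Sym2 ℕ)) (R : Finset (Sym2 ℕ)),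
        IsReduction m (insert s(a, a+1) R) Lr → R ⊆ m.chords.erase s(a, a+1) →
        IsReduction m' (R.image (Sym2.map (sDn a))) (Lr.map (Sym2.map (sDn a))) := by
      intro Lr
      induction Lr with
      | nil => intro R _ _; exact IsReduction.nil _
      | cons c Lc ihc =>
        intro R hr hR
        cases hr with
        | cons _ _ _ hrc htail =>
        obtain ⟨hcm, hcR, hbf⟩ := hrc
        have hcne : c ≠ s(a, a+1) := fun h => hcR (by rw [h]; exact Finset.mem_insert_self _ _)
        have hce : c ∈ m.chords.erase s(a, a+1) := Finset.mem_erase.mpr ⟨hcne, hcm⟩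
        rw [List.map_cons]
        refine IsReduction.cons _ _ _ ⟨?_, ?_, ?_⟩ ?_
        · rw [hm'c]; exact Finset.mem_image_of_mem _ hce
        · intro hmem
          rw [Finset.mem_image] at hmem
          obtain ⟨d, hd, hdc⟩ := hmem
          have : d = c := hmapinj d (hR hd) c hce hdc
          subst this
          exact hcR (Finset.mem_insert_of_mem hd)
        · obtain ⟨u, v, huv, hcuv⟩ := sym2_rep c (m.not_diag c hcm)
          subst hcuv
          have hu := hchordept _ hce u (by simp)
          have hv := hchordept _ hce v (by simp)
          rw [Sym2.map_pair_eq,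
            btwnFree_iff _ _ _ (sDn_lt a u v hu.2.2.1 hu.2.2.2 hv.2.2.1 hv.2.2.2 huv)]
          rintro t' ⟨ht'1, ht'2⟩ ⟨hl, hr'⟩
          simp only [Finset.mem_coe, Finset.mem_Icc] at ht'1
          have htS := sUp_range a N t' ha1 haN ht'1.1 ht'1.2
          have htne := sUp_ne a t'
          have htT : sUp a t' ∈ (↑(Finset.Icc 1 N) : Set ℕ) \ endpointSet (insert s(a, a+1) R) := by
            constructor
            · simp only [Finset.mem_coe, Finset.mem_Icc]; omega
            · rintro ⟨d, hd, hmemd⟩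
              rcases Finset.mem_insert.mp hd with rfl | hd
              · rw [Sym2.mem_iff] at hmemd
                rcases hmemd with h | h
                · exact htne.1 h
                · exact htne.2 h
              · apply ht'2
                refine ⟨Sym2.map (sDn a) d, Finset.mem_image_of_mem _ hd, ?_⟩
                rw [Sym2.mem_map]
                exact ⟨sUp a t', hmemd, sDn_sUp a t'⟩
          refine (btwnFree_iff _ u v huv).mp hbf (sUp a t') htT ⟨?_, ?_⟩
          · have := (sUp_mono a) hl
            rwa [sUp_sDn a u hu.2.2.1 hu.2.2.2] at this
          · have := (sUp_mono a) hr'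
            rwa [sUp_sDn a v hv.2.2.1 hv.2.2.2] at this
        · have h := ihc (insert c R) (by rwa [Finset.insert_comm] at htail)
            (Finset.insert_subset hce hR)
          rwa [Finset.image_insert] at h
    have hred'' : IsReduction m' ∅ (L'.map (Sym2.map (sDn a))) := by
      have h := key L' ∅ hred' (by simp)
      simpa using h
    have hLmem : ∀ c ∈ L', c ∈ m.chords.erase s(a, a+1) := by
      intro c hc
      obtain ⟨h1, h2⟩ := isReduction_mem hred' c hc
      exact Finset.mem_erase.mpr ⟨fun h => h2 (by rw [h]; exact Finset.mem_insert_self _ _), h1⟩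
    have hLend : ∀ t, t ≠ a → t ≠ a + 1 →
        (sDn a t ∈ endpointSet (L'.map (Sym2.map (sDn a))).toFinset ↔
          t ∈ endpointSet L'.toFinset) := by
      intro t ht1 ht2
      constructor
      · rintro ⟨d', hd', hmem⟩
        rw [List.mem_toFinset, List.mem_map] at hd'
        obtain ⟨d, hd, rfl⟩ := hd'
        rw [Sym2.mem_map] at hmem
        obtain ⟨w, hw, hweq⟩ := hmem
        have hwp := hchordept _ (hLmem d hd) w hw
        have : w = t := sDn_inj a w t hwp.2.2.1 hwp.2.2.2 ht1 ht2 hweq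
        subst this
        exact ⟨d, List.mem_toFinset.mpr hd, hw⟩
      · rintro ⟨d, hd, hmem⟩
        rw [List.mem_toFinset] at hd
        refine ⟨Sym2.map (sDn a) d, ?_, ?_⟩
        · rw [List.mem_toFinset, List.mem_map]; exact ⟨d, hd, rfl⟩
        · rw [Sym2.mem_map]; exact ⟨t, hmem, rfl⟩
    -- maximality transfer
    have hmax' : ∀ c', ¬ removable m' (L'.map (Sym2.map (sDn a))).toFinset c' := by
      rintro c' ⟨hc'm, hc'R, hc'bf⟩
      rw [hm'c, Finset.mem_image] at hc'm
      obtain ⟨c, hce, rfl⟩ := hc'm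
      obtain ⟨u, v, huv, rfl⟩ := sym2_rep c (m.not_diag c (Finset.mem_of_mem_erase hce))
      have hu := hchordept _ hce u (by simp)
      have hv := hchordept _ hce v (by simp)
      apply hmax s(u, v)
      refine ⟨Finset.mem_of_mem_erase hce, ?_, ?_⟩
      · rw [List.toFinset_cons, Finset.mem_insert]
        rintro (h | h)
        · exact (Finset.mem_erase.mp hce).1 h
        · apply hc'R
          rw [List.mem_toFinset, List.mem_map]
          exact ⟨s(u, v), List.mem_toFinset.mp h, rfl⟩
      · rw [btwnFree_iff _ _ _ huv]
        rintro t ⟨ht1, ht2⟩ ⟨hl, hr'⟩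
        simp only [Finset.mem_coe, Finset.mem_Icc] at ht1
        have hta : t ≠ a := by
          intro h
          exact ht2 ⟨s(a, a+1), by rw [List.toFinset_cons]; exact Finset.mem_insert_self _ _,
            by rw [Sym2.mem_iff]; left; exact h⟩
        have hta1 : t ≠ a + 1 := by
          intro h
          exact ht2 ⟨s(a, a+1), by rw [List.toFinset_cons]; exact Finset.mem_insert_self _ _,
            by rw [Sym2.mem_iff]; right; exact h⟩
        rw [Sym2.map_pair_eq] at hc'bf
        have hbfi := (btwnFree_iff _ _ _
          (sDn_lt a u v hu.2.2.1 hu.2.2.2 hv.2.2.1 hv.2.2.2 huv)).mp hc'bf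
        refine hbfi (sDn a t) ⟨?_, ?_⟩ ⟨?_, ?_⟩
        · simp only [Finset.mem_coe, Finset.mem_Icc]
          exact sDn_range a N t ha1 haN ht1.1 ht1.2 hta hta1
        · intro h
          apply ht2
          obtain ⟨d, hd, hmem⟩ := (hLend t hta hta1).mp h
          exact ⟨d, by rw [List.toFinset_cons]; exact Finset.mem_insert_of_mem hd, hmem⟩
        · exact sDn_lt a u t hu.2.2.1 hu.2.2.2 hta hta1 hl
        · exact sDn_lt a t v hta hta1 hv.2.2.1 hv.2.2.2 hr'
    -- stable set correspondence
    have hstab1 : ∀ x ∈ stableSet (N - 2) (L'.map (Sym2.map (sDn a))),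
        sUp a x ∈ stableSet N (s(a, a+1) :: L') := by
      rintro x ⟨hx1, hx2⟩
      simp only [Finset.mem_coe, Finset.mem_Icc] at hx1
      have hr := sUp_range a N x ha1 haN hx1.1 hx1.2
      have hne := sUp_ne a x
      constructor
      · simp only [Finset.mem_coe, Finset.mem_Icc]; omega
      · rintro ⟨d, hd, hmem⟩
        rw [List.toFinset_cons] at hd
        rcases Finset.mem_insert.mp hd with rfl | hd
        · rw [Sym2.mem_iff] at hmem
          rcases hmem with h | h
          · exact hne.1 h
          · exact hne.2 h
        · apply hx2
          rw [← sDn_sUp a x]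
          exact (hLend (sUp a x) hne.1 hne.2).mpr ⟨d, hd, hmem⟩
    have hstab2 : ∀ x ∈ stableSet N (s(a, a+1) :: L'),
        (x ≠ a ∧ x ≠ a + 1) ∧ sDn a x ∈ stableSet (N - 2) (L'.map (Sym2.map (sDn a))) ∧
          sUp a (sDn a x) = x := by
      rintro x ⟨hx1, hx2⟩
      simp only [Finset.mem_coe, Finset.mem_Icc] at hx1
      have hxa : x ≠ a := by
        intro h
        exact hx2 ⟨s(a, a+1), by rw [List.toFinset_cons]; exact Finset.mem_insert_self _ _,
          by rw [Sym2.mem_iff]; left; exact h⟩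
      have hxa1 : x ≠ a + 1 := by
        intro h
        exact hx2 ⟨s(a, a+1), by rw [List.toFinset_cons]; exact Finset.mem_insert_self _ _,
          by rw [Sym2.mem_iff]; right; exact h⟩
      refine ⟨⟨hxa, hxa1⟩, ⟨?_, ?_⟩, sUp_sDn a x hxa hxa1⟩
      · simp only [Finset.mem_coe, Finset.mem_Icc]
        exact sDn_range a N x ha1 haN hx1.1 hx1.2 hxa hxa1
      · intro h
        obtain ⟨d, hd, hmem⟩ := (hLend x hxa hxa1).mp h
        exact hx2 ⟨d, by rw [List.toFinset_cons]; exact Finset.mem_insert_of_mem hd, hmem⟩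
    obtain ⟨φ, hbij, hmono, hch⟩ := hcore
    have hσbij : Set.BijOn (sUp a) (stableSet (N - 2) (L'.map (Sym2.map (sDn a))))
        (stableSet N (s(a, a+1) :: L')) := by
      refine ⟨hstab1, fun x _ y _ h => (sUp_mono a).injective h, ?_⟩
      intro x hx
      obtain ⟨hne, hsd, hsu⟩ := hstab2 x hx
      exact ⟨sDn a x, hsd, hsu⟩
    have hcore' : IsCoreVia m' (L'.map (Sym2.map (sDn a))) m0 := by
      refine ⟨φ ∘ sUp a, hbij.comp hσbij, ?_, ?_⟩
      · intro x hx y hy hxy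
        exact hmono _ (hstab1 x hx) _ (hstab1 y hy) (sUp_mono a hxy)
      · intro p q hp hq
        have h1 := hch (sUp a p) (sUp a q) (hstab1 p hp) (hstab1 q hq)
        rw [Function.comp_apply, Function.comp_apply, ← h1]
        constructor
        · intro hpq
          rw [hm'c, Finset.mem_image] at hpq
          obtain ⟨c, hce, hc⟩ := hpq
          have hrt := hroundtrip c hce
          rw [hc, Sym2.map_pair_eq] at hrt
          rw [hrt]
          exact Finset.mem_of_mem_erase hce
        · intro hmm
          have hne : s(sUp a p, sUp a q) ≠ s(a, a+1) := by
            intro h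
            rw [Sym2.eq_iff] at h
            rcases h with ⟨h, _⟩ | ⟨h, _⟩
            · exact (sUp_ne a p).1 h
            · exact (sUp_ne a p).2 h
          rw [hm'c, Finset.mem_image]
          refine ⟨s(sUp a p, sUp a q), Finset.mem_erase.mpr ⟨hne, hmm⟩, ?_⟩
          rw [Sym2.map_pair_eq, sDn_sUp, sDn_sUp]
    obtain ⟨idx', hlen', heq'⟩ := ih (L'.map (Sym2.map (sDn a)))
      (by rw [List.length_map]; exact hLen) (N - 2) m' ⟨hred'', hmax'⟩ M m0 hcore'
    refine ⟨a :: idx', by simp [hlen'], ?_⟩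
    rw [List.foldr_cons, ← heq', insertChords_eq, hm'c, Finset.image_image]
    have himg : (m.chords.erase s(a, a+1)).image (Sym2.map (sUp a) ∘ Sym2.map (sDn a)) =
        m.chords.erase s(a, a+1) := by
      rw [show (m.chords.erase s(a, a+1)).image (Sym2.map (sUp a) ∘ Sym2.map (sDn a)) =
          (m.chords.erase s(a, a+1)).image id from
        Finset.image_congr (fun c hc => hroundtrip c (Finset.mem_coe.mp hc)), Finset.image_id]
    rw [himg, Finset.insert_erase hc1m]

/-- Every matching `m` on `[N]` with `k` unstable chords can be written as
`insert_{i1} ∘ ⋯ ∘ insert_{ik}` applied to its core, for some indices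
`i1, …, ik`. -/
theorem stmt17 (N : ℕ) (m : MatchingOn (Finset.Icc 1 N)) (L : List (Sym2 ℕ))
    (hL : IsMaximalReduction m L) (k : ℕ) (hk : L.length = k)
    (M : ℕ) (m0 : MatchingOn (Finset.Icc 1 M)) (hcore : IsCoreVia m L m0) :
    ∃ idx : List ℕ, idx.length = k ∧ m.chords = idx.foldr insertChords m0.chords := by
  obtain ⟨idx, hlen, heq⟩ := core_aux k L hk N m hL M m0 hcore
  exact ⟨idx, hlen, heq⟩
end

section
/- The number of perfect matchings on [2n] with exactly i short chords equals the number of short-chord-free matchings on [2n-i] with exactly i unmatched vertices. -/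
open Finset

-- ------- Sym2 helpers -------
lemma sym2_cases (c : Sym2 ℕ) : ∃ a b, c = s(a, b) := by
  induction c using Sym2.ind with | _ a b => exact ⟨a, b, rfl⟩

lemma mem_left (a b : ℕ) : a ∈ s(a, b) := by rw [Sym2.mem_iff]; left; rfl
lemma mem_right (a b : ℕ) : b ∈ s(a, b) := by rw [Sym2.mem_iff]; right; rfl

-- ---- arithmetic ----

/-- collapse map for short-position set `J`. -/
def coll (J : Finset ℕ) (x : ℕ) : ℕ := x - (J.filter (· < x)).card

/-- expand map for unmatched set `U`. -/
def expa (U : Finset ℕ) (y : ℕ) : ℕ := y + (U.filter (· < y)).card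

lemma filtlt_succ (A : Finset ℕ) (x : ℕ) :
    (A.filter (· < x + 1)).card = (A.filter (· < x)).card + (if x ∈ A then 1 else 0) := by
  have h1 : A.filter (· < x + 1) = A.filter (· < x) ∪ A.filter (· = x) := by
    rw [← filter_or]
    apply filter_congr
    intro a _
    omega
  have h2 : A.filter (· = x) = if x ∈ A then {x} else ∅ := by
    split
    · ext a; simp only [mem_filter, mem_singleton]
      constructor
      · rintro ⟨_, h⟩; exact h
      · rintro rfl; exact ⟨by assumption, rfl⟩
    · ext a; simp only [mem_filter, notMem_empty, iff_false]
      rintro ⟨ha, rfl⟩; exact absurd ha (by assumption)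
  have hd : Disjoint (A.filter (· < x)) (A.filter (· = x)) := by
    apply disjoint_filter_filter'
    simp only [disjoint_iff_inf_le]
    intro a ha
    simp only [Pi.inf_apply, inf_Prop_eq] at ha
    omega
  rw [h1, card_union_of_disjoint hd, h2]
  split <;> simp

lemma filtlt_le (A : Finset ℕ) (x : ℕ) : (A.filter (· < x)).card ≤ x := by
  calc (A.filter (· < x)).card ≤ (range x).card := by
        apply card_le_card
        intro a ha
        simp only [mem_filter] at ha
        simpa using ha.2
    _ = x := card_range x

lemma filtlt_lt (A : Finset ℕ) (hA : ∀ j ∈ A, 1 ≤ j) (x : ℕ) (hx : 1 ≤ x) :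
    (A.filter (· < x)).card < x := by
  have : (A.filter (· < x)).card ≤ (Icc 1 (x-1)).card := by
    apply card_le_card
    intro a ha
    simp only [mem_filter] at ha
    have := hA a ha.1
    simp only [mem_Icc]
    omega
  simp only [Nat.card_Icc] at this
  omega

lemma coll_succ_mem (J : Finset ℕ) (x : ℕ) (h : x ∈ J) : coll J (x+1) = coll J x := by
  unfold coll
  rw [filtlt_succ, if_pos h]
  have := filtlt_le J x
  omega

lemma coll_succ_not (J : Finset ℕ) (x : ℕ) (h : x ∉ J) : coll J (x+1) = coll J x + 1 := by
  unfold coll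
  rw [filtlt_succ, if_neg h]
  have := filtlt_le J x
  omega

lemma coll_mono (J : Finset ℕ) : Monotone (coll J) := by
  apply monotone_nat_of_le_succ
  intro x
  by_cases h : x ∈ J
  · rw [coll_succ_mem J x h]
  · rw [coll_succ_not J x h]; omega

lemma coll_add_two (J : Finset ℕ) (hs : ∀ j ∈ J, j + 1 ∉ J) (x : ℕ) :
    coll J x + 1 ≤ coll J (x + 2) := by
  by_cases h : x ∈ J
  · have h1 : x + 1 ∉ J := hs x h
    rw [show x + 2 = (x+1)+1 by ring, coll_succ_not J (x+1) h1, coll_succ_mem J x h]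
  · have : coll J (x+1) = coll J x + 1 := coll_succ_not J x h
    calc coll J x + 1 = coll J (x+1) := this.symm
      _ ≤ coll J (x+2) := coll_mono J (by omega)

lemma coll_lt_of_two_le (J : Finset ℕ) (hs : ∀ j ∈ J, j + 1 ∉ J) {x y : ℕ} (h : x + 2 ≤ y) :
    coll J x < coll J y := by
  have := coll_add_two J hs x
  have := coll_mono J h
  omega

lemma coll_ivt (J : Finset ℕ) (x₀ : ℕ) : ∀ d v, coll J x₀ ≤ v → v ≤ coll J (x₀ + d) →
    ∃ x, x₀ ≤ x ∧ x ≤ x₀ + d ∧ coll J x = v := by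
  intro d
  induction d with
  | zero =>
    intro v h1 h2
    simp only [Nat.add_zero] at h2
    exact ⟨x₀, le_refl _, by omega, by omega⟩
  | succ d ih =>
    intro v h1 h2
    rw [show x₀ + (d+1) = x₀ + d + 1 by ring] at h2
    by_cases h : v ≤ coll J (x₀ + d)
    · obtain ⟨x, hx1, hx2, hx3⟩ := ih v h1 h
      exact ⟨x, hx1, by omega, hx3⟩
    · have hstep : coll J (x₀ + d + 1) ≤ coll J (x₀ + d) + 1 := by
        by_cases hm : x₀ + d ∈ J
        · rw [coll_succ_mem J _ hm]; omega
        · rw [coll_succ_not J _ hm]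
      have : v = coll J (x₀ + d + 1) := by omega
      exact ⟨x₀ + d + 1, by omega, by omega, this.symm⟩

lemma expa_succ (U : Finset ℕ) (y : ℕ) :
    expa U (y+1) = expa U y + 1 + (if y ∈ U then 1 else 0) := by
  unfold expa
  rw [filtlt_succ]
  omega

lemma expa_strictMono (U : Finset ℕ) : StrictMono (expa U) := by
  apply strictMono_nat_of_lt_succ
  intro y
  rw [expa_succ]
  split <;> omega

lemma expa_add_two (U : Finset ℕ) (y : ℕ) : expa U y + 2 ≤ expa U (y + 2) := by
  have h1 := expa_succ U y
  have h2 := expa_succ U (y+1)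
  rw [show y + 2 = (y+1)+1 by ring]
  split at h1 <;> split at h2 <;> omega

lemma expa_ivt (U : Finset ℕ) (y : ℕ) : ∀ z x, y < z → expa U y ≤ x → x < expa U z →
    ∃ w, y ≤ w ∧ w < z ∧ (x = expa U w ∨ (w ∈ U ∧ x = expa U w + 1)) := by
  intro z
  induction z with
  | zero => intro x h; omega
  | succ z ih =>
    intro x hyz h1 h2
    rcases lt_or_ge x (expa U z) with h | h
    · rcases Nat.lt_or_ge y z with hy | hy
      · obtain ⟨w, hw1, hw2, hw3⟩ := ih x hy h1 h
        exact ⟨w, hw1, by omega, hw3⟩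
      · have : y = z := by omega
        subst this
        have := expa_strictMono U (show y < y + 1 by omega)
        omega
    · rw [expa_succ] at h2
      refine ⟨z, by omega, by omega, ?_⟩
      split at h2
      · rcases Nat.eq_or_lt_of_le h with h' | h'
        · exact Or.inl h'.symm
        · exact Or.inr ⟨by assumption, by omega⟩
      · exact Or.inl (by omega)

-- ------- section B: matchings -------
variable {N : ℕ}

def shortF (m : MatchingOn (Finset.Icc 1 N)) : Finset ℕ :=
  (Finset.Icc 1 N).filter (fun j => s(j, j + 1) ∈ m.chords)

lemma mem_shortF {m : MatchingOn (Finset.Icc 1 N)} {j : ℕ} :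
    j ∈ shortF m ↔ s(j, j + 1) ∈ m.chords := by
  unfold shortF
  rw [Finset.mem_filter]
  constructor
  · rintro ⟨_, h⟩; exact h
  · intro h; exact ⟨m.mem_support _ h j (mem_left _ _), h⟩

lemma shortF_sparse (m : MatchingOn (Finset.Icc 1 N)) :
    ∀ j ∈ shortF m, j + 1 ∉ shortF m := by
  intro j hj hj1
  rw [mem_shortF] at hj hj1
  have hne : s(j, j + 1) ≠ s(j + 1, j + 1 + 1) := by simp only [ne_eq, Sym2.eq_iff]; omega
  exact m.disj _ hj _ hj1 hne (j + 1) (mem_right _ _) (mem_left _ _)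

lemma shortF_ge_one (m : MatchingOn (Finset.Icc 1 N)) : ∀ j ∈ shortF m, 1 ≤ j := by
  intro j hj
  rw [mem_shortF] at hj
  have := m.mem_support _ hj j (mem_left _ _)
  simp only [Finset.mem_Icc] at this
  omega

lemma shortF_lt (m : MatchingOn (Finset.Icc 1 N)) : ∀ j ∈ shortF m, j + 1 ≤ N := by
  intro j hj
  rw [mem_shortF] at hj
  have := m.mem_support _ hj (j+1) (mem_right _ _)
  simp only [Finset.mem_Icc] at this
  omega

def NSE (m : MatchingOn (Finset.Icc 1 N)) (x : ℕ) : Prop :=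
  ∃ c ∈ m.chords, x ∈ c ∧ ∀ j : ℕ, c ≠ s(j, j + 1)

def MRel (m : MatchingOn (Finset.Icc 1 N)) (x : ℕ) : Prop := x ∈ shortF m ∨ NSE m x

lemma rel_of_mem_chord {m : MatchingOn (Finset.Icc 1 N)} {c : Sym2 ℕ} {x : ℕ}
    (hc : c ∈ m.chords) (hcs : ∀ j : ℕ, c ≠ s(j, j + 1)) (hx : x ∈ c) : MRel m x :=
  Or.inr ⟨c, hc, hx, hcs⟩

lemma coll_rel_strictMono {m : MatchingOn (Finset.Icc 1 N)} {x y : ℕ}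
    (hy : MRel m y) (hxy : x < y) :
    coll (shortF m) x < coll (shortF m) y := by
  rcases Nat.lt_or_ge y (x + 2) with h | h
  · have hyx : y = x + 1 := by omega
    subst hyx
    have hxJ : x ∉ shortF m := by
      intro hxJ
      rcases hy with hyJ | ⟨c, hc, hyc, hcs⟩
      · exact shortF_sparse m x hxJ hyJ
      · exact m.disj c hc _ (mem_shortF.mp hxJ) (hcs x) (x + 1) hyc (mem_right _ _)
    rw [coll_succ_not _ _ hxJ]
    omega
  · exact coll_lt_of_two_le _ (shortF_sparse m) h

lemma coll_rel_inj {m : MatchingOn (Finset.Icc 1 N)} {x y : ℕ}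
    (hx : MRel m x) (hy : MRel m y)
    (h : coll (shortF m) x = coll (shortF m) y) : x = y := by
  rcases lt_trichotomy x y with h' | h' | h'
  · have := coll_rel_strictMono hy h'; omega
  · exact h'
  · have := coll_rel_strictMono hx h'; omega

lemma coll_gap {m : MatchingOn (Finset.Icc 1 N)} {a b : ℕ} (hc : s(a, b) ∈ m.chords)
    (hns : ∀ j : ℕ, s(a, b) ≠ s(j, j + 1)) (hab : a < b) :
    coll (shortF m) a + 2 ≤ coll (shortF m) b := by
  set J := shortF m with hJ
  have hb2 : a + 2 ≤ b := by
    rcases Nat.lt_or_ge (a + 1) b with h | h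
    · omega
    · exfalso
      have : b = a + 1 := by omega
      exact hns a (by rw [this])
  set T := J.filter (fun j => a < j ∧ j + 1 < b) with hT
  have hsplit : J.filter (· < b) = J.filter (· < a) ∪ T := by
    ext j
    simp only [hT, Finset.mem_filter, Finset.mem_union]
    constructor
    · rintro ⟨hjJ, hjb⟩
      rcases Nat.lt_trichotomy j a with h | h | h
      · exact Or.inl ⟨hjJ, h⟩
      · exfalso
        subst h
        exact m.disj _ hc _ (mem_shortF.mp hjJ) (hns j) j (mem_left _ _) (mem_left _ _)
      · refine Or.inr ⟨hjJ, h, ?_⟩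
        rcases Nat.lt_or_ge (j + 1) b with h' | h'
        · exact h'
        · exfalso
          have hjb1 : j + 1 = b := by omega
          exact m.disj _ hc _ (mem_shortF.mp hjJ) (hns j) b (mem_right _ _)
            (by rw [← hjb1]; exact mem_right _ _)
    · rintro (⟨hjJ, hja⟩ | ⟨hjJ, hja, hjb⟩)
      · exact ⟨hjJ, by omega⟩
      · exact ⟨hjJ, by omega⟩
  have hdisj : Disjoint (J.filter (· < a)) T := by
    rw [Finset.disjoint_left]
    intro j h1 h2
    simp only [hT, Finset.mem_filter] at h1 h2
    omega
  have hcard : (J.filter (· < b)).card = (J.filter (· < a)).card + T.card := by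
    rw [hsplit, Finset.card_union_of_disjoint hdisj]
  have h2t : 2 * T.card + a + 1 ≤ b := by
    have hsub : T.biUnion (fun j => {j, j + 1}) ⊆ Finset.Ioo a b := by
      intro x hx
      simp only [Finset.mem_biUnion, hT, Finset.mem_filter, Finset.mem_insert,
        Finset.mem_singleton] at hx
      obtain ⟨j, ⟨_, hja, hjb⟩, hx⟩ := hx
      simp only [Finset.mem_Ioo]
      omega
    have hbi : (T.biUnion (fun j => {j, j + 1})).card = 2 * T.card := by
      rw [Finset.card_biUnion]
      · rw [Finset.sum_congr rfl (g := fun _ => 2) (fun j _ => by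
          rw [Finset.card_pair (by omega)]), Finset.sum_const, smul_eq_mul]
        ring
      · intro j hj j' hj' hne
        have hjJ : j ∈ J := (Finset.mem_filter.mp (hT ▸ hj)).1
        have hj'J : j' ∈ J := (Finset.mem_filter.mp (hT ▸ hj')).1
        have h1 : j' ≠ j + 1 := fun h => shortF_sparse m j hjJ (h ▸ hj'J)
        have h2 : j ≠ j' + 1 := fun h => shortF_sparse m j' hj'J (h ▸ hjJ)
        rw [Function.onFun, Finset.disjoint_left]
        intro x hx hx'
        simp only [Finset.mem_insert, Finset.mem_singleton] at hx hx'
        omega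
    have := Finset.card_le_card hsub
    rw [hbi, Nat.card_Ioo] at this
    omega
  have hα := filtlt_le J a
  unfold coll
  omega

def Fch (m : MatchingOn (Finset.Icc 1 N)) : Finset (Sym2 ℕ) :=
  (m.chords \ (shortF m).image (fun j => s(j, j + 1))).image (Sym2.map (coll (shortF m)))

lemma mem_Fch {m : MatchingOn (Finset.Icc 1 N)} {c' : Sym2 ℕ} :
    c' ∈ Fch m ↔ ∃ c ∈ m.chords, (∀ j : ℕ, c ≠ s(j, j + 1)) ∧
      c' = Sym2.map (coll (shortF m)) c := by
  unfold Fch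
  simp only [Finset.mem_image, Finset.mem_sdiff]
  constructor
  · rintro ⟨c, ⟨hc, hcs⟩, rfl⟩
    refine ⟨c, hc, ?_, rfl⟩
    intro j hj
    exact hcs ⟨j, mem_shortF.mpr (hj ▸ hc), hj.symm⟩
  · rintro ⟨c, hc, hcs, rfl⟩
    refine ⟨c, ⟨hc, ?_⟩, rfl⟩
    rintro ⟨j, hjJ, hjc⟩
    exact hcs j hjc.symm

lemma coll_top (m : MatchingOn (Finset.Icc 1 N)) :
    coll (shortF m) N = N - (shortF m).card := by
  unfold coll
  congr 2
  apply Finset.filter_true_of_mem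
  intro j hj
  have := shortF_lt m j hj
  omega

lemma coll_mem_Icc {m : MatchingOn (Finset.Icc 1 N)} {x : ℕ} (hx : x ∈ Finset.Icc 1 N) :
    coll (shortF m) x ∈ Finset.Icc 1 (N - (shortF m).card) := by
  simp only [Finset.mem_Icc] at hx ⊢
  constructor
  · have := filtlt_lt (shortF m) (shortF_ge_one m) x hx.1
    unfold coll
    omega
  · have h1 : coll (shortF m) x ≤ coll (shortF m) N := coll_mono _ hx.2
    have h2 := coll_top m
    omega

def Fm (m : MatchingOn (Finset.Icc 1 N)) : MatchingOn (Finset.Icc 1 (N - (shortF m).card)) where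
  chords := Fch m
  not_diag := by
    intro c' hc'
    rw [mem_Fch] at hc'
    obtain ⟨c, hc, hcs, rfl⟩ := hc'
    obtain ⟨a, b, rfl⟩ := sym2_cases c
    rw [Sym2.map_pair_eq, Sym2.mk_isDiag_iff]
    intro h
    have ha : MRel m a := rel_of_mem_chord hc hcs (mem_left _ _)
    have hb : MRel m b := rel_of_mem_chord hc hcs (mem_right _ _)
    have hab := coll_rel_inj ha hb h
    exact m.not_diag _ hc (by rw [hab]; exact Sym2.mk_isDiag_iff.mpr rfl)
  mem_support := by
    intro c' hc' x hx
    rw [mem_Fch] at hc'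
    obtain ⟨c, hc, hcs, rfl⟩ := hc'
    obtain ⟨e, he, rfl⟩ := Sym2.mem_map.mp hx
    exact coll_mem_Icc (m.mem_support c hc e he)
  disj := by
    intro c1 h1 c2 h2 hne x hx1 hx2
    rw [mem_Fch] at h1 h2
    obtain ⟨d1, hd1, hs1, rfl⟩ := h1
    obtain ⟨d2, hd2, hs2, rfl⟩ := h2
    obtain ⟨e1, he1, rfl⟩ := Sym2.mem_map.mp hx1
    obtain ⟨e2, he2, heq⟩ := Sym2.mem_map.mp hx2
    have he12 : e2 = e1 := coll_rel_inj (rel_of_mem_chord hd2 hs2 he2)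
      (rel_of_mem_chord hd1 hs1 he1) heq
    have hd : d1 ≠ d2 := fun h => hne (by rw [h])
    exact m.disj d1 hd1 d2 hd2 hd e1 he1 (he12 ▸ he2)

lemma Fm_chords (m : MatchingOn (Finset.Icc 1 N)) : (Fm m).chords = Fch m := rfl

lemma Fm_noshort (m : MatchingOn (Finset.Icc 1 N)) :
    ∀ j : ℕ, s(j, j + 1) ∉ (Fm m).chords := by
  intro j hj
  rw [Fm_chords, mem_Fch] at hj
  obtain ⟨c, hc, hcs, hmap⟩ := hj
  obtain ⟨a, b, rfl⟩ := sym2_cases c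
  rw [Sym2.map_pair_eq, Sym2.eq_iff] at hmap
  have hab : a ≠ b := fun h => m.not_diag _ hc (by rw [h]; exact Sym2.mk_isDiag_iff.mpr rfl)
  rcases Nat.lt_or_ge a b with h | h
  · have := coll_gap hc hcs h
    omega
  · have hba : b < a := by omega
    have hc' : s(b, a) ∈ m.chords := by rwa [Sym2.eq_swap]
    have hcs' : ∀ j : ℕ, s(b, a) ≠ s(j, j + 1) := by
      intro j' h'
      exact hcs j' (by rwa [Sym2.eq_swap] at h')
    have := coll_gap hc' hcs' hba
    omega

def unmFin {M : ℕ} (m : MatchingOn (Finset.Icc 1 M)) : Finset ℕ :=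
  (Finset.Icc 1 M).filter (fun x => ∀ c ∈ m.chords, x ∉ c)

lemma mem_unmFin {M : ℕ} {m : MatchingOn (Finset.Icc 1 M)} {x : ℕ} :
    x ∈ unmFin m ↔ x ∈ Finset.Icc 1 M ∧ ∀ c ∈ m.chords, x ∉ c := Finset.mem_filter

lemma unmatchedCard_eq {M : ℕ} (m : MatchingOn (Finset.Icc 1 M)) :
    unmatchedCard m = (unmFin m).card := by
  unfold unmatchedCard
  have h : ((Finset.Icc 1 M : Finset ℕ) : Set ℕ) \ endpointSet m.chords = ↑(unmFin m) := by
    ext x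
    simp only [Set.mem_diff, Finset.coe_filter, endpointSet, Set.mem_setOf_eq, unmFin,
      Finset.mem_coe, Finset.mem_filter]
    push_neg
    tauto
  rw [h, Set.ncard_coe_finset]

lemma shortSet_eq (m : MatchingOn (Finset.Icc 1 N)) :
    {j : ℕ | s(j, j + 1) ∈ m.chords} = ↑(shortF m) := by
  ext j
  simp only [Set.mem_setOf_eq, Finset.mem_coe, mem_shortF]

lemma Fm_surj (m : MatchingOn (Finset.Icc 1 N)) :
    ∀ v ∈ Finset.Icc 1 (N - (shortF m).card), ∃ x ∈ Finset.Icc 1 N, coll (shortF m) x = v := by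
  intro v hv
  simp only [Finset.mem_Icc] at hv
  have hN : 1 ≤ N := by omega
  have h1 : coll (shortF m) 1 = 1 := by
    unfold coll
    have h : (shortF m).filter (· < 1) = ∅ := by
      rw [Finset.filter_eq_empty_iff]
      intro j hj
      have := shortF_ge_one m j hj
      omega
    rw [h]
    simp
  have hn : coll (shortF m) (1 + (N - 1)) = N - (shortF m).card := by
    rw [show 1 + (N - 1) = N by omega]
    exact coll_top m
  obtain ⟨x, hx1, hx2, hx3⟩ := coll_ivt (shortF m) 1 (N - 1) v (by omega) (by omega)
  exact ⟨x, by simp only [Finset.mem_Icc]; omega, hx3⟩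

lemma Fm_unm (m : MatchingOn (Finset.Icc 1 N))
    (hp : ∀ x ∈ Finset.Icc 1 N, ∃ c ∈ m.chords, x ∈ c) :
    unmFin (Fm m) = (shortF m).image (coll (shortF m)) := by
  ext v
  rw [mem_unmFin]
  simp only [Finset.mem_image, Fm_chords]
  constructor
  · rintro ⟨hvIcc, hunc⟩
    obtain ⟨x, hxIcc, rfl⟩ := Fm_surj m v hvIcc
    obtain ⟨c, hc, hxc⟩ := hp x hxIcc
    by_cases hcs : ∃ j : ℕ, c = s(j, j + 1)
    · obtain ⟨j, rfl⟩ := hcs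
      have hjJ : j ∈ shortF m := mem_shortF.mpr hc
      refine ⟨j, hjJ, ?_⟩
      rcases Sym2.mem_iff.mp hxc with rfl | rfl
      · rfl
      · exact (coll_succ_mem _ j hjJ).symm
    · push_neg at hcs
      exfalso
      exact hunc (Sym2.map (coll (shortF m)) c) (mem_Fch.mpr ⟨c, hc, hcs, rfl⟩)
        (Sym2.mem_map.mpr ⟨x, hxc, rfl⟩)
  · rintro ⟨j, hjJ, rfl⟩
    have hjIcc : j ∈ Finset.Icc 1 N := by
      simp only [Finset.mem_Icc]
      exact ⟨shortF_ge_one m j hjJ, by have := shortF_lt m j hjJ; omega⟩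
    refine ⟨coll_mem_Icc hjIcc, ?_⟩
    intro c' hc' hmem
    rw [mem_Fch] at hc'
    obtain ⟨c, hc, hcs, rfl⟩ := hc'
    obtain ⟨e, he, heq⟩ := Sym2.mem_map.mp hmem
    have hej : e = j := coll_rel_inj (rel_of_mem_chord hc hcs he) (Or.inl hjJ) heq
    subst hej
    exact m.disj c hc _ (mem_shortF.mp hjJ) (hcs e) e he (mem_left _ _)

lemma Fm_unmatchedCard (m : MatchingOn (Finset.Icc 1 N))
    (hp : ∀ x ∈ Finset.Icc 1 N, ∃ c ∈ m.chords, x ∈ c) :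
    unmatchedCard (Fm m) = (shortF m).card := by
  rw [unmatchedCard_eq, Fm_unm m hp]
  apply Finset.card_image_of_injOn
  intro a ha b hb hab
  exact coll_rel_inj (Or.inl ha) (Or.inl hb) hab

-- ------- G side -------
variable {M : ℕ}

lemma unmFin_mem_Icc {m : MatchingOn (Finset.Icc 1 M)} {u : ℕ} (hu : u ∈ unmFin m) :
    1 ≤ u ∧ u ≤ M := by
  have := (mem_unmFin.mp hu).1
  simpa only [Finset.mem_Icc] using this

lemma expa_bound1 {m : MatchingOn (Finset.Icc 1 M)} {y : ℕ} (hy : y ∈ Finset.Icc 1 M) :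
    expa (unmFin m) y ∈ Finset.Icc 1 (M + (unmFin m).card) := by
  simp only [Finset.mem_Icc] at hy ⊢
  unfold expa
  have := Finset.card_filter_le (unmFin m) (· < y)
  omega

lemma expa_bound2 {m : MatchingOn (Finset.Icc 1 M)} {u : ℕ} (hu : u ∈ unmFin m) :
    expa (unmFin m) u + 1 ≤ M + (unmFin m).card := by
  have hins : insert u ((unmFin m).filter (· < u)) ⊆ unmFin m := by
    intro x hx
    rcases Finset.mem_insert.mp hx with rfl | hx
    · exact hu
    · exact Finset.mem_of_mem_filter x hx
  have hnm : u ∉ (unmFin m).filter (· < u) := by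
    simp only [Finset.mem_filter]
    omega
  have := Finset.card_le_card hins
  rw [Finset.card_insert_of_notMem hnm] at this
  have hb := unmFin_mem_Icc hu
  unfold expa
  omega

lemma expa_ne_succ {U : Finset ℕ} {u : ℕ} (hu : u ∈ U) (a : ℕ) :
    expa U a ≠ expa U u + 1 := by
  rcases le_or_gt a u with h | h
  · have := (expa_strictMono U).monotone h
    omega
  · have h1 : expa U (u + 1) = expa U u + 2 := by
      rw [expa_succ, if_pos hu]
    have h2 := (expa_strictMono U).monotone h
    simp only [Nat.succ_eq_add_one] at h2
    omega

def Gch (m : MatchingOn (Finset.Icc 1 M)) : Finset (Sym2 ℕ) :=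
  m.chords.image (Sym2.map (expa (unmFin m))) ∪
    (unmFin m).image (fun u => s(expa (unmFin m) u, expa (unmFin m) u + 1))

def Gm (m : MatchingOn (Finset.Icc 1 M)) :
    MatchingOn (Finset.Icc 1 (M + (unmFin m).card)) where
  chords := Gch m
  not_diag := by
    intro c hc
    rcases Finset.mem_union.mp hc with h | h
    · obtain ⟨d, hd, rfl⟩ := Finset.mem_image.mp h
      obtain ⟨a, b, rfl⟩ := sym2_cases d
      rw [Sym2.map_pair_eq, Sym2.mk_isDiag_iff]
      intro h'
      exact m.not_diag _ hd (by
        rw [(expa_strictMono (unmFin m)).injective h']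
        exact Sym2.mk_isDiag_iff.mpr rfl)
    · obtain ⟨u, hu, rfl⟩ := Finset.mem_image.mp h
      rw [Sym2.mk_isDiag_iff]
      omega
  mem_support := by
    intro c hc x hx
    rcases Finset.mem_union.mp hc with h | h
    · obtain ⟨d, hd, rfl⟩ := Finset.mem_image.mp h
      obtain ⟨e, he, rfl⟩ := Sym2.mem_map.mp hx
      exact expa_bound1 (m.mem_support d hd e he)
    · obtain ⟨u, hu, rfl⟩ := Finset.mem_image.mp h
      have hb := unmFin_mem_Icc hu
      have h1 := expa_bound1 (m := m) (y := u) (by simp only [Finset.mem_Icc]; omega)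
      have h2 := expa_bound2 hu
      simp only [Finset.mem_Icc] at h1 ⊢
      rcases Sym2.mem_iff.mp hx with rfl | rfl
      · exact h1
      · omega
  disj := by
    intro c1 h1 c2 h2 hne x hx1 hx2
    rcases Finset.mem_union.mp h1 with h1' | h1' <;> rcases Finset.mem_union.mp h2 with h2' | h2'
    · -- mapped / mapped
      obtain ⟨d1, hd1, rfl⟩ := Finset.mem_image.mp h1'
      obtain ⟨d2, hd2, rfl⟩ := Finset.mem_image.mp h2'
      obtain ⟨e1, he1, rfl⟩ := Sym2.mem_map.mp hx1
      obtain ⟨e2, he2, heq⟩ := Sym2.mem_map.mp hx2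
      have he12 : e2 = e1 := (expa_strictMono (unmFin m)).injective heq
      exact m.disj d1 hd1 d2 hd2 (fun h => hne (by rw [h])) e1 he1 (he12 ▸ he2)
    · -- mapped / short
      obtain ⟨d1, hd1, rfl⟩ := Finset.mem_image.mp h1'
      obtain ⟨u, hu, rfl⟩ := Finset.mem_image.mp h2'
      obtain ⟨e, he, rfl⟩ := Sym2.mem_map.mp hx1
      rcases Sym2.mem_iff.mp hx2 with h | h
      · have : e = u := (expa_strictMono (unmFin m)).injective h
        subst this
        exact (mem_unmFin.mp hu).2 d1 hd1 he
      · exact expa_ne_succ hu e h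
    · -- short / mapped
      obtain ⟨u, hu, rfl⟩ := Finset.mem_image.mp h1'
      obtain ⟨d2, hd2, rfl⟩ := Finset.mem_image.mp h2'
      obtain ⟨e, he, heq⟩ := Sym2.mem_map.mp hx2
      rcases Sym2.mem_iff.mp hx1 with rfl | rfl
      · have : e = u := (expa_strictMono (unmFin m)).injective heq
        subst this
        exact (mem_unmFin.mp hu).2 d2 hd2 he
      · exact expa_ne_succ hu e heq
    · -- short / short
      obtain ⟨u, hu, rfl⟩ := Finset.mem_image.mp h1'
      obtain ⟨u', hu', hequ⟩ := Finset.mem_image.mp h2'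
      have huu : u ≠ u' := fun h => hne (by rw [← hequ, h])
      have hstep : ∀ w ∈ unmFin m, expa (unmFin m) (w + 1) = expa (unmFin m) w + 2 := by
        intro w hw
        rw [expa_succ, if_pos hw]
      have hkey : expa (unmFin m) u + 2 ≤ expa (unmFin m) u' ∨
          expa (unmFin m) u' + 2 ≤ expa (unmFin m) u := by
        rcases Nat.lt_or_ge u u' with h | h
        · left
          have := (expa_strictMono (unmFin m)).monotone (show u + 1 ≤ u' from h)
          rw [hstep u hu] at this
          omega
        · right
          have hlt : u' < u := by omega
          have := (expa_strictMono (unmFin m)).monotone (show u' + 1 ≤ u from hlt)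
          rw [hstep u' hu'] at this
          omega
      rw [← hequ] at hx2
      rcases Sym2.mem_iff.mp hx1 with rfl | rfl <;> rcases Sym2.mem_iff.mp hx2 with h | h <;> omega

lemma Gm_chords (m : MatchingOn (Finset.Icc 1 M)) : (Gm m).chords = Gch m := rfl

lemma Gmap_not_short (m : MatchingOn (Finset.Icc 1 M))
    (hns : ∀ j : ℕ, s(j, j + 1) ∉ m.chords) :
    ∀ d ∈ m.chords, ∀ j : ℕ, Sym2.map (expa (unmFin m)) d ≠ s(j, j + 1) := by
  intro d hd j hmap
  obtain ⟨a, b, rfl⟩ := sym2_cases d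
  rw [Sym2.map_pair_eq, Sym2.eq_iff] at hmap
  have hab : a ≠ b := fun h => m.not_diag _ hd (by rw [h]; exact Sym2.mk_isDiag_iff.mpr rfl)
  have hgap : ∀ p q : ℕ, p < q → s(p, q) ∈ m.chords →
      expa (unmFin m) p + 2 ≤ expa (unmFin m) q := by
    intro p q hpq hpq'
    have hq2 : p + 2 ≤ q := by
      rcases Nat.lt_or_ge (p + 1) q with h | h
      · omega
      · exfalso
        have : q = p + 1 := by omega
        exact hns p (this ▸ hpq')
    calc expa (unmFin m) p + 2 ≤ expa (unmFin m) (p + 2) := expa_add_two _ p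
      _ ≤ expa (unmFin m) q := (expa_strictMono _).monotone hq2
  rcases Nat.lt_or_ge a b with h | h
  · have := hgap a b h hd
    omega
  · have hba : b < a := by omega
    have := hgap b a hba (by rwa [Sym2.eq_swap])
    omega

lemma Gm_perfect (m : MatchingOn (Finset.Icc 1 M)) :
    ∀ x ∈ Finset.Icc 1 (M + (unmFin m).card), ∃ c ∈ (Gm m).chords, x ∈ c := by
  intro x hx
  simp only [Finset.mem_Icc] at hx
  have hM : 1 ≤ M := by
    rcases Nat.eq_zero_or_pos M with h | h
    · exfalso
      have hU : unmFin m = ∅ := by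
        rw [Finset.eq_empty_iff_forall_notMem]
        intro u hu
        have := unmFin_mem_Icc hu
        omega
      rw [hU] at hx
      simp at hx
      omega
    · exact h
  have h1 : expa (unmFin m) 1 = 1 := by
    unfold expa
    have h : (unmFin m).filter (· < 1) = ∅ := by
      rw [Finset.filter_eq_empty_iff]
      intro u hu
      have := unmFin_mem_Icc hu
      omega
    rw [h]
    simp
  have htop : expa (unmFin m) (M + 1) = M + 1 + (unmFin m).card := by
    unfold expa
    have h : (unmFin m).filter (· < M + 1) = unmFin m := by
      apply Finset.filter_true_of_mem
      intro u hu
      have := unmFin_mem_Icc hu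
      omega
    rw [h]
  obtain ⟨w, hw1, hw2, hw3⟩ := expa_ivt (unmFin m) 1 (M + 1) x (by omega) (by omega) (by omega)
  have hwIcc : w ∈ Finset.Icc 1 M := by simp only [Finset.mem_Icc]; omega
  rcases hw3 with rfl | ⟨hwU, rfl⟩
  · by_cases hwU : w ∈ unmFin m
    · refine ⟨s(expa (unmFin m) w, expa (unmFin m) w + 1), ?_, mem_left _ _⟩
      rw [Gm_chords]
      exact Finset.mem_union.mpr (Or.inr (Finset.mem_image.mpr ⟨w, hwU, rfl⟩))
    · have hcov : ¬ (∀ c ∈ m.chords, w ∉ c) := fun h => hwU (mem_unmFin.mpr ⟨hwIcc, h⟩)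
      push_neg at hcov
      obtain ⟨c, hc, hwc⟩ := hcov
      refine ⟨Sym2.map (expa (unmFin m)) c, ?_, Sym2.mem_map.mpr ⟨w, hwc, rfl⟩⟩
      rw [Gm_chords]
      exact Finset.mem_union.mpr (Or.inl (Finset.mem_image.mpr ⟨c, hc, rfl⟩))
  · refine ⟨s(expa (unmFin m) w, expa (unmFin m) w + 1), ?_, mem_right _ _⟩
    rw [Gm_chords]
    exact Finset.mem_union.mpr (Or.inr (Finset.mem_image.mpr ⟨w, hwU, rfl⟩))

lemma shortF_Gm (m : MatchingOn (Finset.Icc 1 M))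
    (hns : ∀ j : ℕ, s(j, j + 1) ∉ m.chords) :
    shortF (Gm m) = (unmFin m).image (expa (unmFin m)) := by
  ext j
  rw [mem_shortF, Gm_chords]
  constructor
  · intro hj
    rcases Finset.mem_union.mp hj with h | h
    · obtain ⟨d, hd, hmap⟩ := Finset.mem_image.mp h
      exact absurd hmap (Gmap_not_short m hns d hd j)
    · obtain ⟨u, hu, hequ⟩ := Finset.mem_image.mp h
      rw [Sym2.eq_iff] at hequ
      have : expa (unmFin m) u = j := by omega
      exact Finset.mem_image.mpr ⟨u, hu, this⟩
  · intro hj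
    obtain ⟨u, hu, rfl⟩ := Finset.mem_image.mp hj
    exact Finset.mem_union.mpr (Or.inr (Finset.mem_image.mpr ⟨u, hu, rfl⟩))

lemma phi_psi (U : Finset ℕ) (y : ℕ) : coll (U.image (expa U)) (expa U y) = y := by
  unfold coll
  have h1 : (U.image (expa U)).filter (· < expa U y)
      = (U.filter (fun u => expa U u < expa U y)).image (expa U) := by
    rw [Finset.filter_image]
  have h2 : U.filter (fun u => expa U u < expa U y) = U.filter (· < y) := by
    apply Finset.filter_congr
    intro u _
    exact (expa_strictMono U).lt_iff_lt
  rw [h1, h2, Finset.card_image_of_injective _ (expa_strictMono U).injective]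
  unfold expa
  omega

lemma psi_phi (m : MatchingOn (Finset.Icc 1 N)) {x : ℕ} (hx : MRel m x) :
    expa ((shortF m).image (coll (shortF m))) (coll (shortF m) x) = x := by
  unfold expa
  have h1 : ((shortF m).image (coll (shortF m))).filter (· < coll (shortF m) x)
      = ((shortF m).filter (fun j => coll (shortF m) j < coll (shortF m) x)).image
        (coll (shortF m)) := by
    rw [Finset.filter_image]
  have h2 : (shortF m).filter (fun j => coll (shortF m) j < coll (shortF m) x)
      = (shortF m).filter (· < x) := by
    apply Finset.filter_congr
    intro j hj
    constructor
    · intro h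
      by_contra h'
      push_neg at h'
      exact absurd h (not_lt.mpr (coll_mono _ h'))
    · intro h
      exact coll_rel_strictMono hx h
  have h3 : (((shortF m).filter (· < x)).image (coll (shortF m))).card
      = ((shortF m).filter (· < x)).card := by
    apply Finset.card_image_of_injOn
    intro a ha b hb hab
    exact coll_rel_inj (Or.inl (Finset.mem_of_mem_filter a ha))
      (Or.inl (Finset.mem_of_mem_filter b hb)) hab
  rw [h1, h2, h3]
  have := filtlt_le (shortF m) x
  unfold coll
  omega

lemma GF (m : MatchingOn (Finset.Icc 1 N))
    (hp : ∀ x ∈ Finset.Icc 1 N, ∃ c ∈ m.chords, x ∈ c) :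
    Gch (Fm m) = m.chords := by
  unfold Gch
  rw [Fm_unm m hp, Fm_chords]
  have h1 : (Fch m).image (Sym2.map (expa ((shortF m).image (coll (shortF m)))))
      = m.chords \ (shortF m).image (fun j => s(j, j + 1)) := by
    unfold Fch
    rw [Finset.image_image]
    have heq : ∀ c ∈ m.chords \ (shortF m).image (fun j => s(j, j + 1)),
        (Sym2.map (expa ((shortF m).image (coll (shortF m)))) ∘ Sym2.map (coll (shortF m))) c
          = id c := by
      intro c hc
      rw [Finset.mem_sdiff] at hc
      have hcs : ∀ j : ℕ, c ≠ s(j, j + 1) := by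
        intro j hj
        exact hc.2 (Finset.mem_image.mpr ⟨j, mem_shortF.mpr (hj ▸ hc.1), hj.symm⟩)
      obtain ⟨a, b, rfl⟩ := sym2_cases c
      simp only [Function.comp_apply, id_eq, Sym2.map_pair_eq]
      rw [psi_phi m (rel_of_mem_chord hc.1 hcs (mem_left _ _)),
        psi_phi m (rel_of_mem_chord hc.1 hcs (mem_right _ _))]
    rw [Finset.image_congr heq, Finset.image_id]
  have h2 : ((shortF m).image (coll (shortF m))).image
      (fun v => s(expa ((shortF m).image (coll (shortF m))) v,
        expa ((shortF m).image (coll (shortF m))) v + 1))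
      = (shortF m).image (fun j => s(j, j + 1)) := by
    rw [Finset.image_image]
    apply Finset.image_congr
    intro j hj
    simp only [Function.comp_apply]
    rw [psi_phi m (Or.inl hj)]
  rw [h1, h2, Finset.sdiff_union_of_subset]
  intro c hc
  obtain ⟨j, hj, rfl⟩ := Finset.mem_image.mp hc
  exact mem_shortF.mp hj

lemma FG (m : MatchingOn (Finset.Icc 1 M))
    (hns : ∀ j : ℕ, s(j, j + 1) ∉ m.chords) :
    Fch (Gm m) = m.chords := by
  unfold Fch
  rw [shortF_Gm m hns, Gm_chords]
  have hshort : ((unmFin m).image (expa (unmFin m))).image (fun j => s(j, j + 1))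
      = (unmFin m).image (fun u => s(expa (unmFin m) u, expa (unmFin m) u + 1)) := by
    rw [Finset.image_image]
    rfl
  have hsplit : Gch m \ (unmFin m).image
      (fun u => s(expa (unmFin m) u, expa (unmFin m) u + 1))
      = m.chords.image (Sym2.map (expa (unmFin m))) := by
    unfold Gch
    rw [Finset.union_sdiff_right]
    rw [Finset.sdiff_eq_self_iff_disjoint]
    rw [Finset.disjoint_left]
    intro c hc hc'
    obtain ⟨d, hd, rfl⟩ := Finset.mem_image.mp hc
    obtain ⟨u, hu, hequ⟩ := Finset.mem_image.mp hc'
    exact Gmap_not_short m hns d hd (expa (unmFin m) u) hequ.symm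
  rw [hshort, hsplit, Finset.image_image]
  have heq : ∀ c ∈ m.chords,
      (Sym2.map (coll ((unmFin m).image (expa (unmFin m)))) ∘ Sym2.map (expa (unmFin m))) c
        = id c := by
    intro c hc
    obtain ⟨a, b, rfl⟩ := sym2_cases c
    simp only [Function.comp_apply, id_eq, Sym2.map_pair_eq]
    rw [phi_psi, phi_psi]
  rw [Finset.image_congr heq, Finset.image_id]

def castN {A B : ℕ} (h : A = B) (m : MatchingOn (Finset.Icc 1 A)) :
    MatchingOn (Finset.Icc 1 B) := h ▸ m

lemma castN_chords {A B : ℕ} (h : A = B) (m : MatchingOn (Finset.Icc 1 A)) :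
    (castN h m).chords = m.chords := by subst h; rfl

lemma castN_unmatchedCard {A B : ℕ} (h : A = B) (m : MatchingOn (Finset.Icc 1 A)) :
    unmatchedCard (castN h m) = unmatchedCard m := by subst h; rfl

lemma castN_Gch {A B : ℕ} (h : A = B) (m : MatchingOn (Finset.Icc 1 A)) :
    Gch (castN h m) = Gch m := by subst h; rfl

lemma castN_Fch {A B : ℕ} (h : A = B) (m : MatchingOn (Finset.Icc 1 A)) :
    Fch (castN h m) = Fch m := by subst h; rfl

lemma castN_shortF {A B : ℕ} (h : A = B) (m : MatchingOn (Finset.Icc 1 A)) :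
    shortF (castN h m) = shortF m := by subst h; rfl

lemma castN_perfect {A B : ℕ} (h : A = B) (m : MatchingOn (Finset.Icc 1 A))
    (hp : ∀ x ∈ Finset.Icc 1 A, ∃ c ∈ m.chords, x ∈ c) :
    ∀ x ∈ Finset.Icc 1 B, ∃ c ∈ (castN h m).chords, x ∈ c := by subst h; exact hp

lemma MatchingOn.ext' {S : Finset ℕ} {m m' : MatchingOn S} (h : m.chords = m'.chords) :
    m = m' := by
  cases m; cases m'; simp_all

lemma shortF_card {m : MatchingOn (Finset.Icc 1 N)} {i : ℕ}
    (hi : {j : ℕ | s(j, j + 1) ∈ m.chords}.ncard = i) : (shortF m).card = i := by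
  rw [← hi, shortSet_eq, Set.ncard_coe_finset]

/-- The number of perfect matchings on `[2n]` with exactly `i` short chords equals
the number of short-chord-free matchings on `[2n - i]` with exactly `i` unmatched
vertices. -/
theorem stmt19 (n i : ℕ) :
    Nat.card {m : MatchingOn (Finset.Icc 1 (2 * n)) //
        (∀ x ∈ Finset.Icc 1 (2 * n), ∃ c ∈ m.chords, x ∈ c) ∧
        {j : ℕ | s(j, j + 1) ∈ m.chords}.ncard = i} =
    Nat.card {m : MatchingOn (Finset.Icc 1 (2 * n - i)) //
        (∀ j : ℕ, s(j, j + 1) ∉ m.chords) ∧ unmatchedCard m = i} := by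
  apply Nat.card_congr
  -- cast equalities
  have hF : ∀ m : {m : MatchingOn (Finset.Icc 1 (2 * n)) //
      (∀ x ∈ Finset.Icc 1 (2 * n), ∃ c ∈ m.chords, x ∈ c) ∧
      {j : ℕ | s(j, j + 1) ∈ m.chords}.ncard = i},
      2 * n - (shortF m.1).card = 2 * n - i := fun m => by rw [shortF_card m.2.2]
  have hUcard : ∀ m : {m : MatchingOn (Finset.Icc 1 (2 * n - i)) //
      (∀ j : ℕ, s(j, j + 1) ∉ m.chords) ∧ unmatchedCard m = i},
      (unmFin m.1).card = i := fun m => by rw [← unmatchedCard_eq, m.2.2]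
  have hG : ∀ m : {m : MatchingOn (Finset.Icc 1 (2 * n - i)) //
      (∀ j : ℕ, s(j, j + 1) ∉ m.chords) ∧ unmatchedCard m = i},
      2 * n - i + (unmFin m.1).card = 2 * n := by
    intro m
    have h1 := hUcard m
    have h2 : (unmFin m.1).card ≤ 2 * n - i := by
      calc (unmFin m.1).card ≤ (Finset.Icc 1 (2 * n - i)).card :=
            Finset.card_le_card (Finset.filter_subset _ _)
        _ = 2 * n - i := by rw [Nat.card_Icc]; omega
    omega
  refine ⟨fun m => ⟨castN (hF m) (Fm m.1), ?_, ?_⟩,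
      fun m => ⟨castN (hG m) (Gm m.1), ?_, ?_⟩, ?_, ?_⟩
  · -- no short chords
    intro j hj
    rw [castN_chords] at hj
    exact Fm_noshort m.1 j hj
  · -- unmatched count
    rw [castN_unmatchedCard, Fm_unmatchedCard m.1 m.2.1, shortF_card m.2.2]
  · -- perfect
    exact castN_perfect (hG m) (Gm m.1) (Gm_perfect m.1)
  · -- short count
    have h1 : {j : ℕ | s(j, j + 1) ∈ (castN (hG m) (Gm m.1)).chords}
        = ↑(shortF (castN (hG m) (Gm m.1))) := shortSet_eq _
    rw [h1, Set.ncard_coe_finset, castN_shortF, shortF_Gm m.1 m.2.1,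
      Finset.card_image_of_injective _ (expa_strictMono _).injective, hUcard m]
  · -- left inverse
    intro m
    apply Subtype.ext
    apply MatchingOn.ext'
    rw [castN_chords, Gm_chords, castN_Gch, GF m.1 m.2.1]
  · -- right inverse
    intro m
    apply Subtype.ext
    apply MatchingOn.ext'
    rw [castN_chords, Fm_chords, castN_Fch, FG m.1 m.2.1]
end
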